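/- (Proposition 1, first part: Upper Bound of Bias.) Under the balanced within-stratum design, the absolute difference between the overall difference-in-means estimator and the inverse-probability-weighting estimator satisfies |τ̂_DIM − τ̂_IPW| ≤ 2 · (1/π̂_inf − 1) · Σ_{x ∈ 𝒳, n_x > 0} (n_x / n) · |τ̂_HTE(x)|, where π̂_inf = min_{x ∈ 𝒳} π̂(x). -/

import Mathlib

open Finset

noncomputable section

variable {N : ℕ} {𝒳 : Type*} [Fintype 𝒳] [DecidableEq 𝒳]

/-- Number of sampled units in stratum `x`: `n_x = #{i : S_i = 1, X_i = x}`. -/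
def nStratum (X : Fin N → 𝒳) (S : Fin N → Bool) (x : 𝒳) : ℕ :=
  (univ.filter fun i => S i = true ∧ X i = x).card

/-- Total number of sampled units: `n = #{i : S_i = 1}`. -/
def nSample (S : Fin N → Bool) : ℕ :=
  (univ.filter fun i => S i = true).card

/-- Stratum-level difference-in-means estimator `τ̂_HTE(x)`. -/
def tauHTE (X : Fin N → 𝒳) (S W : Fin N → Bool) (Y1 Y0 : Fin N → ℝ) (x : 𝒳) : ℝ :=
  (2 / (nStratum X S x : ℝ)) *
      ∑ i ∈ univ.filter (fun i => S i = true ∧ X i = x ∧ W i = true), Y1 i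
    - (2 / (nStratum X S x : ℝ)) *
      ∑ i ∈ univ.filter (fun i => S i = true ∧ X i = x ∧ W i = false), Y0 i

/-- Overall difference-in-means estimator `τ̂_DIM`. -/
def tauDIM (S W : Fin N → Bool) (Y1 Y0 : Fin N → ℝ) : ℝ :=
  (1 / ((univ.filter fun i => S i = true ∧ W i = true).card : ℝ)) *
      ∑ i ∈ univ.filter (fun i => S i = true ∧ W i = true), Y1 i
    - (1 / ((univ.filter fun i => S i = true ∧ W i = false).card : ℝ)) *
      ∑ i ∈ univ.filter (fun i => S i = true ∧ W i = false), Y0 i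

/-- Inverse-probability-weighting estimator `τ̂_IPW` with weight function `π̂`. -/
def tauIPW (X : Fin N → 𝒳) (S W : Fin N → Bool) (Y1 Y0 : Fin N → ℝ) (piHat : 𝒳 → ℝ) : ℝ :=
  (1 / ((univ.filter fun i => S i = true ∧ W i = true).card : ℝ)) *
      ∑ i ∈ univ.filter (fun i => S i = true ∧ W i = true), Y1 i / piHat (X i)
    - (1 / ((univ.filter fun i => S i = true ∧ W i = false).card : ℝ)) *
      ∑ i ∈ univ.filter (fun i => S i = true ∧ W i = false), Y0 i / piHat (X i)

/-- Balanced within-stratum design: in every nonempty stratum, the number of sampled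
treated units equals the number of sampled control units, and both are positive. -/
def BalancedDesign (X : Fin N → 𝒳) (S W : Fin N → Bool) : Prop :=
  ∀ x : 𝒳, 0 < nStratum X S x →
    (univ.filter fun i => S i = true ∧ X i = x ∧ W i = true).card =
        (univ.filter fun i => S i = true ∧ X i = x ∧ W i = false).card ∧
    0 < (univ.filter fun i => S i = true ∧ X i = x ∧ W i = true).card

end

/-!
Both estimators average the same treated and control arms, so their difference reweights unit
`i` by `1 - 1 / π̂(X i)`, a factor that only depends on the stratum. Under balance each arm has
`n / 2` units and `n_x / 2` of them in stratum `x`, so the difference becomes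
`Σ_x (1 - 1 / π̂(x)) · (n_x / n) · τ̂_HTE(x)`. Finally `0 ≤ 1 / π̂(x) - 1 ≤ 1 / π̂_inf - 1`.
-/

theorem Finset.sum_comp_mul_eq_sum_mul_sum_fiberwise {ι κ R : Type*} [Fintype κ]
    [DecidableEq κ] [CommSemiring R] (s : Finset ι) (g : ι → κ) (c : κ → R) (f : ι → R) :
    ∑ i ∈ s, c (g i) * f i = ∑ j, c j * ∑ i ∈ s with g i = j, f i := by
  rw [← sum_fiberwise s g]
  refine sum_congr rfl fun j _ => ?_
  rw [mul_sum]
  exact sum_congr rfl fun i hi => by rw [(mem_filter.1 hi).2]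

theorem abs_one_sub_one_div_le {p q : ℝ} (hq : 0 < q) (hqp : q ≤ p) (hp : p ≤ 1) :
    |1 - 1 / p| ≤ 1 / q - 1 := by
  have hp_pos : 0 < p := hq.trans_le hqp
  have h_one_le : 1 ≤ 1 / p := by rw [le_div_iff₀ hp_pos]; linarith
  rw [abs_sub_comm, abs_of_nonneg (sub_nonneg.2 h_one_le)]
  linarith [one_div_le_one_div_of_le hq hqp]

section Design

variable {N : ℕ} {𝒳 : Type*}

def arm (S W : Fin N → Bool) (w : Bool) : Finset (Fin N) :=
  univ.filter fun i => S i = true ∧ W i = w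

theorem tauDIM_sub_tauIPW_eq (X : Fin N → 𝒳) (S W : Fin N → Bool) (Y1 Y0 : Fin N → ℝ)
    (piHat : 𝒳 → ℝ) :
    tauDIM S W Y1 Y0 - tauIPW X S W Y1 Y0 piHat =
      1 / #(arm S W true) * ∑ i ∈ arm S W true, (1 - 1 / piHat (X i)) * Y1 i
        - 1 / #(arm S W false) * ∑ i ∈ arm S W false, (1 - 1 / piHat (X i)) * Y0 i := by
  simp only [tauDIM, tauIPW, arm, sub_mul, one_mul, one_div_mul_eq_div, sum_sub_distrib]
  ring

variable [DecidableEq 𝒳]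

def stratumArm (X : Fin N → 𝒳) (S W : Fin N → Bool) (x : 𝒳) (w : Bool) : Finset (Fin N) :=
  univ.filter fun i => S i = true ∧ X i = x ∧ W i = w

variable (X : Fin N → 𝒳) (S W : Fin N → Bool) (Y1 Y0 : Fin N → ℝ)

theorem filter_arm_eq_stratumArm (x : 𝒳) (w : Bool) :
    (arm S W w).filter (X · = x) = stratumArm X S W x w := by
  ext i
  simp only [arm, stratumArm, mem_filter, mem_univ, true_and]
  tauto

theorem nStratum_eq_card_add_card (x : 𝒳) :
    nStratum X S x = #(stratumArm X S W x true) + #(stratumArm X S W x false) := by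
  rw [nStratum, ← card_filter_add_card_filter_not (p := fun i => W i = true)]
  congr 2 <;> ext i <;> simp [stratumArm, and_assoc]

theorem stratumArm_eq_empty_of_nStratum_eq_zero {x : 𝒳} (hx : nStratum X S x = 0)
    (w : Bool) : stratumArm X S W x w = ∅ := by
  rw [nStratum_eq_card_add_card X S W] at hx
  cases w <;> exact card_eq_zero.1 (by omega)

theorem nStratum_div_mul_tauHTE {x : 𝒳} (hx : nStratum X S x ≠ 0) :
    nStratum X S x / nSample S * tauHTE X S W Y1 Y0 x =
      2 / nSample S * (∑ i ∈ stratumArm X S W x true, Y1 i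
        - ∑ i ∈ stratumArm X S W x false, Y0 i) := by
  have hx' : (nStratum X S x : ℝ) ≠ 0 := Nat.cast_ne_zero.2 hx
  simp only [tauHTE, stratumArm]
  field_simp

namespace BalancedDesign

variable {X S W}

theorem nStratum_eq_two_mul (hbal : BalancedDesign X S W) (x : 𝒳) (w : Bool) :
    nStratum X S x = 2 * #(stratumArm X S W x w) := by
  have hsum := nStratum_eq_card_add_card X S W x
  rcases Nat.eq_zero_or_pos (nStratum X S x) with hx | hx
  · simp [stratumArm_eq_empty_of_nStratum_eq_zero X S W hx, hx]
  · have heq : #(stratumArm X S W x true) = #(stratumArm X S W x false) := (hbal x hx).1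
    cases w <;> omega

end BalancedDesign

variable [Fintype 𝒳]

theorem card_arm_eq_sum_card_stratumArm (w : Bool) :
    #(arm S W w) = ∑ x, #(stratumArm X S W x w) := by
  rw [card_eq_sum_card_fiberwise fun i _ => mem_coe.2 (mem_univ (X i))]
  simp only [filter_arm_eq_stratumArm]

theorem nSample_eq_sum_nStratum : nSample S = ∑ x, nStratum X S x := by
  rw [nSample, card_eq_sum_card_fiberwise fun i _ => mem_coe.2 (mem_univ (X i))]
  refine sum_congr rfl fun x _ => ?_
  rw [nStratum, filter_filter]

namespace BalancedDesign

variable {X S W}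

theorem nSample_eq_two_mul (hbal : BalancedDesign X S W) (w : Bool) :
    nSample S = 2 * #(arm S W w) := by
  rw [nSample_eq_sum_nStratum X, card_arm_eq_sum_card_stratumArm X, mul_sum]
  exact sum_congr rfl fun x _ => hbal.nStratum_eq_two_mul x w

theorem one_div_card_arm_mul_sum_eq (hbal : BalancedDesign X S W) (w : Bool) (c : 𝒳 → ℝ)
    (Z : Fin N → ℝ) :
    1 / #(arm S W w) * ∑ i ∈ arm S W w, c (X i) * Z i =
      ∑ x, c x * (2 / nSample S * ∑ i ∈ stratumArm X S W x w, Z i) := by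
  rw [sum_comp_mul_eq_sum_mul_sum_fiberwise, mul_sum, hbal.nSample_eq_two_mul w]
  refine sum_congr rfl fun x _ => ?_
  rw [filter_arm_eq_stratumArm]
  push_cast
  ring

theorem tauDIM_sub_tauIPW_eq_sum (hbal : BalancedDesign X S W) (piHat : 𝒳 → ℝ) :
    tauDIM S W Y1 Y0 - tauIPW X S W Y1 Y0 piHat =
      ∑ x ∈ univ.filter (fun x => 0 < nStratum X S x),
        (1 - 1 / piHat x) * (nStratum X S x / nSample S * tauHTE X S W Y1 Y0 x) := by
  rw [tauDIM_sub_tauIPW_eq, hbal.one_div_card_arm_mul_sum_eq true (fun x => 1 - 1 / piHat x),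
    hbal.one_div_card_arm_mul_sum_eq false (fun x => 1 - 1 / piHat x), ← sum_sub_distrib,
    sum_filter]
  refine sum_congr rfl fun x _ => ?_
  split_ifs with hx
  · rw [nStratum_div_mul_tauHTE X S W Y1 Y0 hx.ne']
    ring
  · simp [stratumArm_eq_empty_of_nStratum_eq_zero X S W (Nat.eq_zero_of_not_pos hx)]

end BalancedDesign

end Design

variable {N : ℕ} {𝒳 : Type*} [Fintype 𝒳] [DecidableEq 𝒳]

theorem abs_tauDIM_sub_tauIPW_le_two_mul_general
    [Nonempty 𝒳]
    (X : Fin N → 𝒳) (S W : Fin N → Bool) (Y1 Y0 : Fin N → ℝ) (piHat : 𝒳 → ℝ)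
    (hpi : ∀ x, 0 < piHat x ∧ piHat x ≤ 1)
    (hbal : BalancedDesign X S W) :
    |tauDIM S W Y1 Y0 - tauIPW X S W Y1 Y0 piHat| ≤
      2 * (1 / (univ.inf' univ_nonempty piHat) - 1) *
        ∑ x ∈ univ.filter (fun x => 0 < nStratum X S x),
          ((nStratum X S x : ℝ) / (nSample S : ℝ)) * |tauHTE X S W Y1 Y0 x| := by
  set piInf := univ.inf' univ_nonempty piHat
  have hweight (x : 𝒳) : |1 - 1 / piHat x| ≤ 1 / piInf - 1 :=
    abs_one_sub_one_div_le ((lt_inf'_iff _).2 fun x _ => (hpi x).1) (inf'_le _ (mem_univ x))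
      (hpi x).2
  have hweight_nonneg : 0 ≤ 1 / piInf - 1 :=
    (abs_nonneg _).trans (hweight (Classical.arbitrary 𝒳))
  rw [hbal.tauDIM_sub_tauIPW_eq_sum]
  calc _ ≤ ∑ x ∈ univ.filter (fun x => 0 < nStratum X S x),
          |1 - 1 / piHat x| * |nStratum X S x / nSample S * tauHTE X S W Y1 Y0 x| :=
        (abs_sum_le_sum_abs _ _).trans_eq (sum_congr rfl fun x _ => abs_mul _ _)
    _ ≤ ∑ x ∈ univ.filter (fun x => 0 < nStratum X S x),
          (1 / piInf - 1) * (nStratum X S x / nSample S * |tauHTE X S W Y1 Y0 x|) := by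
        refine sum_le_sum fun x _ => ?_
        rw [abs_mul, abs_of_nonneg (by positivity : (0 : ℝ) ≤ nStratum X S x / nSample S)]
        exact mul_le_mul_of_nonneg_right (hweight x) (by positivity)
    _ ≤ _ := by
        rw [← mul_sum, mul_assoc]
        exact le_mul_of_one_le_left (mul_nonneg hweight_nonneg (sum_nonneg fun x _ => by positivity))
          one_le_two

/-- (Proposition 1, first part: Upper Bound of Bias.) Under the balanced within-stratum
design, the absolute difference between the overall difference-in-means estimator and the
inverse-probability-weighting estimator satisfies
`|τ̂_DIM − τ̂_IPW| ≤ 2 · (1/π̂_inf − 1) · Σ_{x, n_x > 0} (n_x / n) · |τ̂_HTE(x)|`,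
where `π̂_inf = min_{x ∈ 𝒳} π̂(x)`. -/
theorem abs_tauDIM_sub_tauIPW_le_two_mul
    [Nonempty 𝒳]
    (X : Fin N → 𝒳) (S W : Fin N → Bool) (Y1 Y0 : Fin N → ℝ) (piHat : 𝒳 → ℝ)
    (hpi : ∀ x, 0 < piHat x ∧ piHat x ≤ 1)
    (hn : 0 < nSample S) (hbal : BalancedDesign X S W) :
    |tauDIM S W Y1 Y0 - tauIPW X S W Y1 Y0 piHat| ≤
      2 * (1 / (univ.inf' univ_nonempty piHat) - 1) *
        ∑ x ∈ univ.filter (fun x => 0 < nStratum X S x),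
          ((nStratum X S x : ℝ) / (nSample S : ℝ)) * |tauHTE X S W Y1 Y0 x| :=
  abs_tauDIM_sub_tauIPW_le_two_mul_general X S W Y1 Y0 piHat hpi hbal
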